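/- arXiv:2411.15669 — 5 statements merged into one kernel-verified Lean document; each statement's English description precedes it below -/
import Mathlib

section
/- Let d, k be positive integers, δ ≥ 0, and let y₁, …, y_k ∈ ℝ^d. Set M := Σ_{i=1}^k y_i y_iᵀ (a symmetric positive semidefinite d × d matrix of rank at most k). Let A be a real symmetric d × d matrix with operator norm ‖A − M‖_op ≤ δ, and let U ⊆ ℝ^d be the span of an orthonormal set of eigenvectors of A corresponding to its min(k, d) largest eigenvalues (counted with multiplicity). Then for every i ∈ {1, …, k}, the Euclidean distance from y_i to the subspace U satisfies dist(y_i, U) ≤ √(2δ). -/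
/-! For `j ≥ k`, the span of the first `j + 1` eigenvectors of `A` has dimension `> k`, so it
contains a vector `z ≠ 0` orthogonal to every `yᵢ`; then `⟪Mz, z⟫ = 0` and
`λⱼ‖z‖² ≤ ⟪Az, z⟫ ≤ ⟪Mz, z⟫ + δ‖z‖² = δ‖z‖²`. The residual `w = yᵢ - proj_U yᵢ` only has
components along eigenvectors with index `≥ k`, hence `⟪Aw, w⟫ ≤ δ‖w‖²`, while
`⟪Mw, w⟫ ≥ ⟪yᵢ, w⟫² = ‖w‖⁴`. Together `‖w‖⁴ ≤ ⟪Aw, w⟫ + δ‖w‖² ≤ 2δ‖w‖²`. -/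

open Matrix
open scoped RealInnerProductSpace
open Module

variable {E : Type*} [NormedAddCommGroup E] [InnerProductSpace ℝ E]

theorem exists_mem_ne_zero_forall_inner_eq_zero {ι : Type*} [Fintype ι] (y : ι → E)
    (V : Submodule ℝ E) [FiniteDimensional ℝ V] (hV : Fintype.card ι < finrank ℝ V) :
    ∃ z ∈ V, z ≠ 0 ∧ ∀ i, ⟪y i, z⟫ = 0 := by
  let f : V →ₗ[ℝ] ι → ℝ := LinearMap.pi fun i => (innerₛₗ ℝ (y i)).comp V.subtype
  obtain ⟨z, hzf, hz0⟩ := Submodule.exists_mem_ne_zero_of_ne_bot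
    (LinearMap.ker_ne_bot_of_finrank_lt (f := f) (by simpa using hV))
  exact ⟨z, z.2, by simpa using hz0, fun i => by simpa [f] using congrFun hzf i⟩

theorem OrthonormalBasis.inner_eq_zero_of_mem_span_image {ι : Type*} [Fintype ι]
    (b : OrthonormalBasis ι ℝ E) {s : Set ι} {x : E} (hx : x ∈ Submodule.span ℝ (b '' s))
    {j : ι} (hj : j ∉ s) : ⟪b j, x⟫ = 0 := by
  have hle : Submodule.span ℝ (b '' s) ≤ LinearMap.ker (innerₛₗ ℝ (b j)) := by
    rw [Submodule.span_le]
    rintro _ ⟨i, hi, rfl⟩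
    exact b.orthonormal.2 (ne_of_mem_of_not_mem hi hj).symm
  exact hle hx

theorem OrthonormalBasis.inner_map_self_eq_sum {ι : Type*} [Fintype ι]
    (b : OrthonormalBasis ι ℝ E) {T : E →ₗ[ℝ] E} {lam : ι → ℝ}
    (hT : ∀ j, T (b j) = lam j • b j) (x : E) :
    ⟪T x, x⟫ = ∑ j, lam j * ⟪b j, x⟫ ^ 2 := by
  have hTx : T x = ∑ j, (lam j * ⟪b j, x⟫) • b j := by
    conv_lhs => rw [← b.sum_repr' x]
    simp only [map_sum, map_smul, hT, smul_smul, mul_comm]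
  rw [hTx, sum_inner]
  exact Finset.sum_congr rfl fun j _ => by rw [real_inner_smul_left]; ring

theorem OrthonormalBasis.inner_map_self_le {ι : Type*} [Fintype ι]
    (b : OrthonormalBasis ι ℝ E) {T : E →ₗ[ℝ] E} {lam : ι → ℝ}
    (hT : ∀ j, T (b j) = lam j • b j) {c : ℝ} {x : E}
    (h : ∀ j, ⟪b j, x⟫ ≠ 0 → lam j ≤ c) : ⟪T x, x⟫ ≤ c * ‖x‖ ^ 2 := by
  rw [b.inner_map_self_eq_sum hT, ← b.sum_sq_inner_right, Finset.mul_sum]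
  refine Finset.sum_le_sum fun j _ => ?_
  by_cases hj : ⟪b j, x⟫ = 0
  · simp [hj]
  · exact mul_le_mul_of_nonneg_right (h j hj) (sq_nonneg _)

theorem OrthonormalBasis.le_inner_map_self {ι : Type*} [Fintype ι]
    (b : OrthonormalBasis ι ℝ E) {T : E →ₗ[ℝ] E} {lam : ι → ℝ}
    (hT : ∀ j, T (b j) = lam j • b j) {c : ℝ} {x : E}
    (h : ∀ j, ⟪b j, x⟫ ≠ 0 → c ≤ lam j) : c * ‖x‖ ^ 2 ≤ ⟪T x, x⟫ := by
  rw [b.inner_map_self_eq_sum hT, ← b.sum_sq_inner_right, Finset.mul_sum]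
  refine Finset.sum_le_sum fun j _ => ?_
  by_cases hj : ⟪b j, x⟫ = 0
  · simp [hj]
  · exact mul_le_mul_of_nonneg_right (h j hj) (sq_nonneg _)

theorem ContinuousLinearMap.inner_apply_self_le_add_of_norm_sub_le {T S : E →L[ℝ] E} {δ : ℝ}
    (h : ‖T - S‖ ≤ δ) (x : E) : ⟪T x, x⟫ ≤ ⟪S x, x⟫ + δ * ‖x‖ ^ 2 := by
  have hTS : ⟪(T - S) x, x⟫ ≤ δ * ‖x‖ ^ 2 := calc
    _ ≤ ‖(T - S) x‖ * ‖x‖ := real_inner_le_norm _ _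
    _ ≤ (δ * ‖x‖) * ‖x‖ := by gcongr; exact (T - S).le_of_opNorm_le h x
    _ = δ * ‖x‖ ^ 2 := by ring
  rw [_root_.sub_apply, inner_sub_left] at hTS
  linarith

theorem Matrix.inner_toEuclideanCLM_sum_outer_self {m ι : Type*} [Fintype m] [DecidableEq m]
    [Fintype ι] (y : ι → EuclideanSpace ℝ m) (x : EuclideanSpace ℝ m) :
    ⟪toEuclideanCLM (𝕜 := ℝ) (∑ i, Matrix.of fun a b => y i a * y i b) x, x⟫
      = ∑ i, ⟪y i, x⟫ ^ 2 := by
  simp only [map_sum, _root_.sum_apply, sum_inner]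
  refine Finset.sum_congr rfl fun i _ => ?_
  have : (Matrix.of fun a b => y i a * y i b) = vecMulVec (y i) (y i) := rfl
  rw [this, real_inner_comm, inner_toEuclideanCLM, vecMulVec_mulVec]
  simp only [dotProduct_comm, op_smul_eq_smul, dotProduct_smul, smul_eq_mul,
    EuclideanSpace.inner_eq_star_dotProduct, star_trivial]
  ring

theorem OrthonormalBasis.eigenvalue_le_of_norm_sub_le {n k : ℕ}
    (b : OrthonormalBasis (Fin n) ℝ E)
    {T S : E →L[ℝ] E} {lam : Fin n → ℝ} (hT : ∀ j, T (b j) = lam j • b j) (hlam : Antitone lam)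
    (y : Fin k → E) (hS : ∀ x, ⟪S x, x⟫ = ∑ i, ⟪y i, x⟫ ^ 2) {δ : ℝ} (hTS : ‖T - S‖ ≤ δ)
    {j : Fin n} (hj : k ≤ j) : lam j ≤ δ := by
  have : FiniteDimensional ℝ E := b.toBasis.finiteDimensional_of_finite
  obtain ⟨z, hzV, hz0, hzy⟩ :=
    exists_mem_ne_zero_forall_inner_eq_zero y (Submodule.span ℝ (b '' Set.Iic j)) (by
      have h := finrank_span_eq_card
        (b.orthonormal.linearIndependent.comp _ (Subtype.val_injective (p := (· ∈ Set.Iic j))))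
      rw [Set.range_comp, Subtype.range_coe] at h
      simp only [h, Fintype.card_fin, Fintype.card_subtype, Set.mem_Iic, Finset.filter_ge_eq_Iic,
        Fin.card_Iic]
      omega)
  have hlow : lam j * ‖z‖ ^ 2 ≤ ⟪T z, z⟫ := b.le_inner_map_self hT fun j' hj' =>
    hlam (not_not.mp fun hj'j => hj' (b.inner_eq_zero_of_mem_span_image hzV hj'j))
  have hup : ⟪T z, z⟫ ≤ δ * ‖z‖ ^ 2 := by
    simpa [hS, hzy] using ContinuousLinearMap.inner_apply_self_le_add_of_norm_sub_le hTS z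
  have hz : 0 < ‖z‖ ^ 2 := by positivity
  exact le_of_mul_le_mul_right (hlow.trans hup) hz

theorem OrthonormalBasis.infDist_le_sqrt_of_norm_sub_le {n k : ℕ}
    (b : OrthonormalBasis (Fin n) ℝ E)
    {T S : E →L[ℝ] E} {lam : Fin n → ℝ} (hT : ∀ j, T (b j) = lam j • b j) (hlam : Antitone lam)
    (y : Fin k → E) (hS : ∀ x, ⟪S x, x⟫ = ∑ i, ⟪y i, x⟫ ^ 2) {δ : ℝ} (hTS : ‖T - S‖ ≤ δ)
    (i : Fin k) :
    Metric.infDist (y i) (Submodule.span ℝ (b '' {j | (j : ℕ) < k}) : Set E) ≤ √(2 * δ) := by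
  have : FiniteDimensional ℝ E := b.toBasis.finiteDimensional_of_finite
  set U := Submodule.span ℝ (b '' {j | (j : ℕ) < k})
  set w := y i - U.starProjection (y i)
  have hwU : w ∈ Uᗮ := U.sub_starProjection_mem_orthogonal (y i)
  have hyw : ⟪y i, w⟫ = ‖w‖ ^ 2 := by
    rw [← sub_add_cancel (y i) (U.starProjection (y i)), inner_add_left,
      Submodule.inner_right_of_mem_orthogonal (U.starProjection_apply_mem _) hwU,
      real_inner_self_eq_norm_sq]
    simp [w]
  have hSw : (‖w‖ ^ 2) ^ 2 ≤ ⟪S w, w⟫ := by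
    rw [hS, ← hyw]
    exact Finset.single_le_sum (f := fun i' => ⟪y i', w⟫ ^ 2) (fun _ _ => sq_nonneg _)
      (Finset.mem_univ i)
  have hTw : ⟪T w, w⟫ ≤ δ * ‖w‖ ^ 2 := b.inner_map_self_le hT fun j hj =>
    b.eigenvalue_le_of_norm_sub_le hT hlam y hS hTS <| not_lt.mp fun hjk =>
      hj (Submodule.inner_right_of_mem_orthogonal
        (Submodule.subset_span (Set.mem_image_of_mem b hjk)) hwU)
  have hST := ContinuousLinearMap.inner_apply_self_le_add_of_norm_sub_le
    ((norm_sub_rev S T).trans_le hTS) w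
  have hδ : 0 ≤ δ := (norm_nonneg _).trans hTS
  have hw : ‖w‖ ^ 2 ≤ 2 * δ := by nlinarith
  calc Metric.infDist (y i) U
      ≤ dist (y i) (U.starProjection (y i)) :=
        Metric.infDist_le_dist_of_mem (U.starProjection_apply_mem _)
    _ = ‖w‖ := dist_eq_norm _ _
    _ ≤ √(2 * δ) := (Real.le_sqrt (norm_nonneg _) (by positivity)).mpr hw

theorem dist_to_top_eigenspace_le_general
    (d k : ℕ) (δ : ℝ)
    (y : Fin k → EuclideanSpace ℝ (Fin d))
    (M A : Matrix (Fin d) (Fin d) ℝ)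
    (hM : M = ∑ i, Matrix.of fun a b => y i a * y i b)
    (hop : ‖Matrix.toEuclideanCLM (𝕜 := ℝ) (A - M)‖ ≤ δ)
    (v : Fin d → EuclideanSpace ℝ (Fin d)) (lam : Fin d → ℝ)
    (hortho : Orthonormal ℝ v)
    (heig : ∀ j, Matrix.toEuclideanLin A (v j) = lam j • v j)
    (hmono : Antitone lam)
    (U : Submodule ℝ (EuclideanSpace ℝ (Fin d)))
    (hU : U = Submodule.span ℝ (v '' {j : Fin d | (j : ℕ) < min k d})) :
    ∀ i, Metric.infDist (y i) (U : Set (EuclideanSpace ℝ (Fin d)))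
      ≤ Real.sqrt (2 * δ) := by
  let b : OrthonormalBasis (Fin d) ℝ (EuclideanSpace ℝ (Fin d)) := .mk hortho
    (hortho.linearIndependent.span_eq_top_of_card_eq_finrank' (by simp)).ge
  have hU' : U = Submodule.span ℝ (b '' {j | (j : ℕ) < k}) := by
    have hlt : {j : Fin d | (j : ℕ) < min k d} = {j : Fin d | (j : ℕ) < k} :=
      Set.ext fun j => by simp [Fin.is_lt]
    rw [hU, hlt, OrthonormalBasis.coe_mk]
  intro i
  rw [hU']
  refine b.infDist_le_sqrt_of_norm_sub_le (T := toEuclideanCLM (𝕜 := ℝ) A)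
    (S := toEuclideanCLM (𝕜 := ℝ) M) (fun j => ?_) hmono y (fun x => ?_) ?_ i
  · simpa [b, ← coe_toEuclideanCLM_eq_toEuclideanLin] using heig j
  · rw [hM]; exact inner_toEuclideanCLM_sum_outer_self y x
  · rwa [← map_sub]

/-- If `M = ∑ i, y_i y_iᵀ` and `A` is a real symmetric matrix with `‖A - M‖_op ≤ δ`,
and `U` is the span of orthonormal eigenvectors of `A` corresponding to its
`min k d` largest eigenvalues (the eigenvalues being listed in nonincreasing order,
counted with multiplicity, by an orthonormal eigenbasis), then every `y_i` is within
distance `√(2δ)` of `U`. -/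
theorem dist_to_top_eigenspace_le
    (d k : ℕ) (hd : 1 ≤ d) (hk : 1 ≤ k) (δ : ℝ) (hδ : 0 ≤ δ)
    (y : Fin k → EuclideanSpace ℝ (Fin d))
    (M A : Matrix (Fin d) (Fin d) ℝ)
    (hM : M = ∑ i, Matrix.of fun a b => y i a * y i b)
    (hA : A.IsHermitian)
    (hop : ‖Matrix.toEuclideanCLM (𝕜 := ℝ) (A - M)‖ ≤ δ)
    (v : Fin d → EuclideanSpace ℝ (Fin d)) (lam : Fin d → ℝ)
    (hortho : Orthonormal ℝ v)
    (heig : ∀ j, Matrix.toEuclideanLin A (v j) = lam j • v j)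
    (hmono : Antitone lam)
    (U : Submodule ℝ (EuclideanSpace ℝ (Fin d)))
    (hU : U = Submodule.span ℝ (v '' {j : Fin d | (j : ℕ) < min k d})) :
    ∀ i, Metric.infDist (y i) (U : Set (EuclideanSpace ℝ (Fin d)))
      ≤ Real.sqrt (2 * δ) :=
  dist_to_top_eigenspace_le_general d k δ y M A hM hop v lam hortho heig hmono U hU
end

section
/- There exists a universal constant C > 0 such that for every integer t ≥ 1 and every real x with |x| ≤ t, the normalized Hermite polynomial satisfies |h_t(x)| ≤ (C · t)^{t/2}. -/
open MeasureTheory ProbabilityTheory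

/-- The standard Gaussian distribution `N(0, I_d)` on `ℝ^d`. -/
noncomputable def stdGaussian (d : ℕ) : Measure (Fin d → ℝ) :=
  Measure.pi fun _ => gaussianReal 0 1

/-- The spherical Gaussian distribution `N(μ, I_d)` on `ℝ^d`. -/
noncomputable def gaussianPi {d : ℕ} (μ : Fin d → ℝ) : Measure (Fin d → ℝ) :=
  Measure.pi fun i => gaussianReal (μ i) 1

/-- The `k`-th normalized probabilist's Hermite polynomial `h_k = He_k / √(k!)`. -/
noncomputable def hermitePoly (k : ℕ) (x : ℝ) : ℝ :=
  Polynomial.aeval x (Polynomial.hermite k) / Real.sqrt k.factorial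

/-- The normalized Hermite tensor `H_k(x) ∈ (ℝ^d)^{⊗k}`: the sum over partitions of
`[k]` into sets of size 1 and 2 (encoded as involutions `π` of `Fin k`: the pairs are
the 2-cycles, the singletons are the fixed points) of the product of `-δ_{i_a, i_b}`
over the pairs and `x_{i_c}` over the singletons, normalized by `1/√(k!)`. -/
noncomputable def hermiteTensor (d k : ℕ) (x : Fin d → ℝ) : (Fin k → Fin d) → ℝ :=
  fun i => (Real.sqrt k.factorial)⁻¹ *
    ∑ π : Fin k → Fin k,
      if ∀ a, π (π a) = a then
        (-1 : ℝ) ^ ((Finset.univ.filter fun a => π a ≠ a).card / 2) *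
        (∏ a ∈ Finset.univ.filter fun a => π a ≠ a,
            if i a = i (π a) then (1 : ℝ) else 0) *
        ∏ a ∈ Finset.univ.filter fun a => π a = a, x (i a)
      else 0

/-- The extended Hermite tensor `H_n(x, y) = Re((x + i y)^{⊗n}) / √(n!)`. -/
noncomputable def extHermiteTensor (d n : ℕ) (x y : Fin d → ℝ) : (Fin n → Fin d) → ℝ :=
  fun i => (∏ j, ((x (i j) : ℂ) + Complex.I * (y (i j) : ℂ))).re / Real.sqrt n.factorial

/-- Entrywise inner product of two order-`k`, dimension-`d` tensors. -/
noncomputable def tinner {d k : ℕ} (A B : (Fin k → Fin d) → ℝ) : ℝ :=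
  ∑ i : Fin k → Fin d, A i * B i

/-!
The explicit coefficients `(n - k - 1)‼ · C(n, k)` of `He_n` are at most `n ^ (n - k) · C(n, k)`,
so the binomial theorem gives `|He_n(x)| ≤ (|x| + n) ^ n`, hence `|He_t(x)| ≤ (2t) ^ t` for
`|x| ≤ t`. Squaring, `h_t(x) ^ 2 ≤ 4 ^ t · t ^ t · (t ^ t / t!) ≤ (4e · t) ^ t`, so `C = 4e` works.
-/

open Polynomial Real
open scoped Nat

namespace Polynomial

theorem abs_coeff_hermite_le (n k : ℕ) : |(hermite n).coeff k| ≤ n ^ (n - k) * n.choose k := by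
  have hdfac : (n - k - 1)‼ ≤ n ^ (n - k) := calc
    (n - k - 1)‼ ≤ (n - k - 1)! := Nat.doubleFactorial_le_factorial _
    _ ≤ (n - k)! := Nat.factorial_le (Nat.sub_le _ _)
    _ ≤ (n - k) ^ (n - k) := Nat.factorial_le_pow _
    _ ≤ n ^ (n - k) := Nat.pow_le_pow_left (Nat.sub_le _ _) _
  rw [coeff_hermite]
  split_ifs
  · rw [abs_mul, abs_mul, abs_neg_one_pow, one_mul, Nat.abs_cast, Nat.abs_cast]
    gcongr
    exact_mod_cast hdfac
  · rw [abs_zero]; positivity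

theorem abs_aeval_hermite_le (n : ℕ) (x : ℝ) : |aeval x (hermite n)| ≤ (|x| + n) ^ n := by
  rw [aeval_eq_sum_range, natDegree_hermite, add_pow]
  refine (Finset.abs_sum_le_sum_abs _ _).trans (Finset.sum_le_sum fun k _ => ?_)
  rw [zsmul_eq_mul, abs_mul, abs_pow, mul_comm, mul_assoc]
  gcongr
  exact_mod_cast abs_coeff_hermite_le n k

end Polynomial

theorem sq_hermitePoly_le (n : ℕ) (x : ℝ) : hermitePoly n x ^ 2 ≤ (|x| + n) ^ (2 * n) / n ! := by
  rw [hermitePoly, div_pow, sq_sqrt (by positivity), ← sq_abs, pow_mul']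
  gcongr
  exact abs_aeval_hermite_le n x

/-- There is a universal constant `C > 0` such that for every `t ≥ 1` and every
real `x` with `|x| ≤ t`, the normalized Hermite polynomial satisfies
`|h_t(x)| ≤ (C·t)^{t/2}`. -/
theorem abs_hermitePoly_le_of_abs_le :
    ∃ C : ℝ, 0 < C ∧
      ∀ (t : ℕ), 1 ≤ t → ∀ x : ℝ, |x| ≤ (t : ℝ) →
        |hermitePoly t x| ≤ (C * t) ^ ((t : ℝ) / 2) := by
  refine ⟨4 * exp 1, by positivity, fun t _ x hx => ?_⟩
  have hfac : (t : ℝ) ^ t / t ! ≤ exp 1 ^ t := by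
    rw [exp_one_pow]; exact pow_div_factorial_le_exp _ t.cast_nonneg t
  have hsq : (|x| + t) ^ (2 * t) / t ! ≤ (4 * exp 1 * t) ^ t := calc
    (|x| + t) ^ (2 * t) / t ! ≤ (2 * t) ^ (2 * t) / t ! := by gcongr; linarith
    _ = (4 * t) ^ t * (t ^ t / t !) := by rw [pow_mul]; ring
    _ ≤ (4 * t) ^ t * exp 1 ^ t := by gcongr
    _ = (4 * exp 1 * t) ^ t := by ring
  calc |hermitePoly t x| ≤ √((|x| + t) ^ (2 * t) / t !) := abs_le_sqrt (sq_hermitePoly_le t x)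
    _ ≤ √((4 * exp 1 * t) ^ t) := sqrt_le_sqrt hsq
    _ = (4 * exp 1 * t) ^ ((t : ℝ) / 2) := by
      rw [sqrt_eq_rpow, ← rpow_natCast, ← rpow_mul (by positivity)]; ring_nf
end

section
/- For every d ≥ 1, every k ∈ ℕ, every unit vector v ∈ ℝ^d (‖v‖₂ = 1), and every x ∈ ℝ^d, the inner product of the normalized Hermite tensor with the k-th tensor power of v satisfies ⟨H_k(x), v^{⊗k}⟩ = h_k(v · x). -/
open MeasureTheory ProbabilityTheory

open Finset Polynomial

noncomputable def invSum (n : ℕ) : Polynomial ℤ :=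
  ∑ π : Fin n → Fin n,
    if ∀ a, π (π a) = a then
      Polynomial.C ((-1 : ℤ) ^ ((Finset.univ.filter fun a => π a ≠ a).card / 2)) *
        Polynomial.X ^ (Finset.univ.filter fun a => π a = a).card
    else 0

def extFun {n : ℕ} (c : Fin (n+1)) (σ : Fin n → Fin n) (a : Fin (n+1)) : Fin (n+1) :=
  if h : a = Fin.last n then c else if a = c then Fin.last n else (σ (a.castPred h)).castSucc

def resFun {n : ℕ} (π : Fin (n+1) → Fin (n+1)) (a : Fin n) : Fin n :=
  if h : π a.castSucc = Fin.last n then a else (π a.castSucc).castPred h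

lemma castSucc_ne_last' {n : ℕ} (a : Fin n) : a.castSucc ≠ Fin.last n :=
  (Fin.castSucc_lt_last a).ne

lemma extFun_last {n : ℕ} {c : Fin (n+1)} {σ : Fin n → Fin n} :
    extFun c σ (Fin.last n) = c := dif_pos rfl

lemma extFun_castSucc_eq {n : ℕ} {c : Fin (n+1)} {σ : Fin n → Fin n} {a : Fin n}
    (h : a.castSucc = c) : extFun c σ a.castSucc = Fin.last n := by
  rw [extFun, dif_neg (castSucc_ne_last' a), if_pos h]

lemma extFun_castSucc_ne {n : ℕ} {c : Fin (n+1)} {σ : Fin n → Fin n} {a : Fin n}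
    (h : a.castSucc ≠ c) : extFun c σ a.castSucc = (σ a).castSucc := by
  rw [extFun, dif_neg (castSucc_ne_last' a), if_neg h, Fin.castPred_castSucc]

lemma extFun_invol {n : ℕ} {c : Fin (n+1)} {σ : Fin n → Fin n}
    (hσ : ∀ a, σ (σ a) = a) (hc : ∀ a, Fin.castSucc a = c → σ a = a) (a : Fin (n+1)) :
    extFun c σ (extFun c σ a) = a := by
  induction a using Fin.lastCases with
  | last =>
    rw [extFun_last]
    induction c using Fin.lastCases with
    | last => exact extFun_last
    | cast b => exact extFun_castSucc_eq rfl
  | cast j =>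
    by_cases h : j.castSucc = c
    · rw [extFun_castSucc_eq h, extFun_last, h]
    · rw [extFun_castSucc_ne h]
      have h2 : (σ j).castSucc ≠ c := by
        intro hc2
        have h3 : j = σ j := (hσ j).symm.trans (hc _ hc2)
        exact h (h3 ▸ hc2)
      rw [extFun_castSucc_ne h2, hσ]

lemma resFun_invol {n : ℕ} {π : Fin (n+1) → Fin (n+1)} (hπ : ∀ a, π (π a) = a) (a : Fin n) :
    resFun π (resFun π a) = a := by
  by_cases h : π a.castSucc = Fin.last n
  · have e : resFun π a = a := dif_pos h
    rw [e, e]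
  · have e1 : resFun π a = (π a.castSucc).castPred h := dif_neg h
    rw [e1]
    have h2 : π ((π a.castSucc).castPred h).castSucc = a.castSucc := by
      rw [Fin.castSucc_castPred, hπ]
    have h3 : π ((π a.castSucc).castPred h).castSucc ≠ Fin.last n := by
      rw [h2]; exact castSucc_ne_last' a
    have e2 : resFun π ((π a.castSucc).castPred h)
        = (π ((π a.castSucc).castPred h).castSucc).castPred h3 := dif_neg h3
    rw [e2]
    apply Fin.castSucc_injective
    rw [Fin.castSucc_castPred, h2]

lemma resFun_fix {n : ℕ} {π : Fin (n+1) → Fin (n+1)} (hπ : ∀ a, π (π a) = a) (a : Fin n)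
    (h : a.castSucc = π (Fin.last n)) : resFun π a = a := by
  have h1 : π a.castSucc = Fin.last n := by rw [h, hπ]
  rw [resFun, dif_pos h1]

lemma extFun_resFun {n : ℕ} {π : Fin (n+1) → Fin (n+1)} (hπ : ∀ a, π (π a) = a) :
    extFun (π (Fin.last n)) (resFun π) = π := by
  funext a
  induction a using Fin.lastCases with
  | last => exact extFun_last
  | cast j =>
    by_cases h : j.castSucc = π (Fin.last n)
    · rw [extFun_castSucc_eq h, h, hπ]
    · have h1 : π j.castSucc ≠ Fin.last n := by
        intro hl
        have h2 := hπ j.castSucc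
        rw [hl] at h2
        exact h h2.symm
      rw [extFun_castSucc_ne h, resFun, dif_neg h1, Fin.castSucc_castPred]

lemma resFun_extFun {n : ℕ} {c : Fin (n+1)} {σ : Fin n → Fin n}
    (hc : ∀ a, Fin.castSucc a = c → σ a = a) : resFun (extFun c σ) = σ := by
  funext a
  by_cases h : a.castSucc = c
  · have h1 : extFun c σ a.castSucc = Fin.last n := extFun_castSucc_eq h
    rw [resFun, dif_pos h1, hc a h]
  · have h1 : extFun c σ a.castSucc = (σ a).castSucc := extFun_castSucc_ne h
    have h2 : extFun c σ a.castSucc ≠ Fin.last n := by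
      rw [h1]; exact castSucc_ne_last' _
    rw [resFun, dif_neg h2]
    apply Fin.castSucc_injective
    rw [Fin.castSucc_castPred, h1]

lemma fixed_extFun_last {n : ℕ} (σ : Fin n → Fin n) :
    (Finset.univ.filter fun a => extFun (Fin.last n) σ a = a)
      = insert (Fin.last n) ((Finset.univ.filter fun a => σ a = a).image Fin.castSucc) := by
  ext a
  simp only [Finset.mem_filter, Finset.mem_univ, true_and, Finset.mem_insert, Finset.mem_image]
  induction a using Fin.lastCases with
  | last => simp [extFun_last]
  | cast j =>
    rw [extFun_castSucc_ne (castSucc_ne_last' j)]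
    constructor
    · intro hh
      exact Or.inr ⟨j, Fin.castSucc_injective _ hh, rfl⟩
    · rintro (hl | ⟨b, hb, hbj⟩)
      · exact absurd hl (castSucc_ne_last' j)
      · cases Fin.castSucc_injective _ hbj
        rw [hb]

lemma card_fixed_extFun_last {n : ℕ} (σ : Fin n → Fin n) :
    (Finset.univ.filter fun a => extFun (Fin.last n) σ a = a).card
      = (Finset.univ.filter fun a => σ a = a).card + 1 := by
  rw [fixed_extFun_last, Finset.card_insert_of_notMem,
    Finset.card_image_of_injective _ (Fin.castSucc_injective n)]
  intro hmem
  simp only [Finset.mem_image] at hmem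
  obtain ⟨b, -, hb⟩ := hmem
  exact castSucc_ne_last' b hb

lemma fixed_extFun_pair {n : ℕ} (σ : Fin n → Fin n) (b : Fin n) (hb : σ b = b) :
    (Finset.univ.filter fun a => extFun b.castSucc σ a = a)
      = ((Finset.univ.filter fun a => σ a = a).erase b).image Fin.castSucc := by
  ext a
  simp only [Finset.mem_filter, Finset.mem_univ, true_and, Finset.mem_image, Finset.mem_erase]
  induction a using Fin.lastCases with
  | last =>
    rw [extFun_last]
    constructor
    · intro h; exact absurd h (castSucc_ne_last' b)
    · rintro ⟨j, _, hj⟩; exact absurd hj (castSucc_ne_last' j)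
  | cast j =>
    by_cases hjb : j = b
    · subst hjb
      rw [extFun_castSucc_eq rfl]
      constructor
      · intro h; exact absurd h.symm (castSucc_ne_last' j)
      · rintro ⟨i, ⟨hib, _⟩, hij⟩; exact absurd (Fin.castSucc_injective _ hij) hib
    · rw [extFun_castSucc_ne (fun h => hjb (Fin.castSucc_injective _ h))]
      constructor
      · intro h; exact ⟨j, ⟨hjb, Fin.castSucc_injective _ h⟩, rfl⟩
      · rintro ⟨i, ⟨hib, hfix⟩, hij⟩
        cases Fin.castSucc_injective _ hij
        rw [hfix]

lemma card_fixed_extFun_pair {n : ℕ} (σ : Fin n → Fin n) (b : Fin n) (hb : σ b = b) :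
    (Finset.univ.filter fun a => extFun b.castSucc σ a = a).card
      = (Finset.univ.filter fun a => σ a = a).card - 1 := by
  rw [fixed_extFun_pair σ b hb,
    Finset.card_image_of_injective _ (Fin.castSucc_injective n),
    Finset.card_erase_of_mem (by simp [hb])]

lemma card_moved {m : ℕ} (π : Fin m → Fin m) :
    (Finset.univ.filter fun a => π a ≠ a).card
      = m - (Finset.univ.filter fun a => π a = a).card := by
  have h := Finset.card_filter_add_card_filter_not
    (s := (Finset.univ : Finset (Fin m))) (p := fun a => π a = a)
  simp only [Finset.card_univ, Fintype.card_fin] at h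
  simp only [ne_eq]
  omega

lemma card_fixed_le {m : ℕ} (π : Fin m → Fin m) :
    (Finset.univ.filter fun a => π a = a).card ≤ m := by
  have h := Finset.card_filter_le (Finset.univ : Finset (Fin m)) (fun a => π a = a)
  simpa using h

theorem invSum_succ (n : ℕ) : invSum (n+1) = X * invSum n - derivative (invSum n) := by
  classical
  have stepA : invSum (n+1)
      = ∑ p : Fin (n+1) × (Fin n → Fin n),
          if (∀ a, p.2 (p.2 a) = a) ∧ (∀ a, Fin.castSucc a = p.1 → p.2 a = a) then
            C ((-1 : ℤ) ^ ((Finset.univ.filter fun a => extFun p.1 p.2 a ≠ a).card / 2)) *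
              X ^ (Finset.univ.filter fun a => extFun p.1 p.2 a = a).card
          else 0 := by
    rw [invSum, ← Finset.sum_filter, ← Finset.sum_filter]
    refine Finset.sum_nbij' (fun π => (π (Fin.last n), resFun π))
      (fun p => extFun p.1 p.2) ?_ ?_ ?_ ?_ ?_
    · intro π hπ
      simp only [Finset.mem_filter, Finset.mem_univ, true_and] at hπ ⊢
      exact ⟨resFun_invol hπ, fun a ha => resFun_fix hπ a ha⟩
    · intro p hp
      simp only [Finset.mem_filter, Finset.mem_univ, true_and] at hp ⊢
      exact extFun_invol hp.1 hp.2
    · intro π hπ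
      simp only [Finset.mem_filter, Finset.mem_univ, true_and] at hπ
      exact extFun_resFun hπ
    · intro p hp
      simp only [Finset.mem_filter, Finset.mem_univ, true_and] at hp
      exact Prod.ext extFun_last (resFun_extFun hp.2)
    · intro π hπ
      simp only [Finset.mem_filter, Finset.mem_univ, true_and] at hπ
      rw [extFun_resFun hπ]
  have hlast : (∑ σ : Fin n → Fin n,
        if (∀ a, σ (σ a) = a) ∧ (∀ a, Fin.castSucc a = Fin.last n → σ a = a) then
          C ((-1 : ℤ) ^ ((Finset.univ.filter fun a => extFun (Fin.last n) σ a ≠ a).card / 2)) *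
            X ^ (Finset.univ.filter fun a => extFun (Fin.last n) σ a = a).card
        else 0)
      = X * invSum n := by
    rw [invSum, Finset.mul_sum]
    refine Finset.sum_congr rfl fun σ _ => ?_
    by_cases hσ : ∀ a, σ (σ a) = a
    · rw [if_pos ⟨hσ, fun a ha => absurd ha (castSucc_ne_last' a)⟩, if_pos hσ]
      rw [card_moved (extFun (Fin.last n) σ), card_fixed_extFun_last σ, card_moved σ]
      have hle := card_fixed_le σ
      have he : n + 1 - ((Finset.univ.filter fun a => σ a = a).card + 1)
          = n - (Finset.univ.filter fun a => σ a = a).card := by omega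
      rw [he]
      ring
    · rw [if_neg (fun hc => hσ hc.1), if_neg hσ, mul_zero]
  have hpair : ∀ b : Fin n, (∑ σ : Fin n → Fin n,
        if (∀ a, σ (σ a) = a) ∧ (∀ a, Fin.castSucc a = Fin.castSucc b → σ a = a) then
          C ((-1 : ℤ) ^ ((Finset.univ.filter fun a => extFun (Fin.castSucc b) σ a ≠ a).card / 2)) *
            X ^ (Finset.univ.filter fun a => extFun (Fin.castSucc b) σ a = a).card
        else 0)
      = ∑ σ : Fin n → Fin n, if (∀ a, σ (σ a) = a) ∧ σ b = b then
          -(C ((-1 : ℤ) ^ ((Finset.univ.filter fun a => σ a ≠ a).card / 2)) *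
            X ^ ((Finset.univ.filter fun a => σ a = a).card - 1)) else 0 := by
    intro b
    refine Finset.sum_congr rfl fun σ _ => ?_
    by_cases hσ : (∀ a, σ (σ a) = a) ∧ σ b = b
    · rw [if_pos ⟨hσ.1, fun a ha => by cases Fin.castSucc_injective _ ha; exact hσ.2⟩,
        if_pos hσ]
      rw [card_moved (extFun (Fin.castSucc b) σ), card_fixed_extFun_pair σ b hσ.2,
        card_moved σ]
      have h1 : 1 ≤ (Finset.univ.filter fun a => σ a = a).card :=
        Finset.card_pos.mpr ⟨b, by simp [hσ.2]⟩
      have h2 := card_fixed_le σ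
      have h3 : (n + 1 - ((Finset.univ.filter fun a => σ a = a).card - 1)) / 2
          = (n - (Finset.univ.filter fun a => σ a = a).card) / 2 + 1 := by omega
      rw [h3, pow_succ]
      simp only [map_mul, map_neg, map_one]
      ring
    · rw [if_neg, if_neg hσ]
      intro hc
      exact hσ ⟨hc.1, hc.2 b rfl⟩
  have hder : derivative (invSum n) = ∑ σ : Fin n → Fin n,
      if ∀ a, σ (σ a) = a then
        C ((-1 : ℤ) ^ ((Finset.univ.filter fun a => σ a ≠ a).card / 2)) *
          (C (((Finset.univ.filter fun a => σ a = a).card : ℤ)) *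
            X ^ ((Finset.univ.filter fun a => σ a = a).card - 1))
      else 0 := by
    rw [invSum, map_sum]
    refine Finset.sum_congr rfl fun σ _ => ?_
    split_ifs with h
    · rw [derivative_C_mul, derivative_X_pow]
    · exact derivative_zero
  rw [stepA, Fintype.sum_prod_type, Fin.sum_univ_castSucc]
  simp only [hpair, hlast]
  rw [Finset.sum_comm, hder, invSum, Finset.mul_sum, ← Finset.sum_sub_distrib,
    ← Finset.sum_add_distrib]
  refine Finset.sum_congr rfl fun σ _ => ?_
  by_cases hσ : ∀ a, σ (σ a) = a
  · have e1 : ∀ (q : Polynomial ℤ) (b : Fin n),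
        (if (∀ a, σ (σ a) = a) ∧ σ b = b then q else 0) = if σ b = b then q else 0 := by
      intro q b
      by_cases h : σ b = b <;> simp [h, hσ]
    simp only [e1, if_pos hσ]
    rw [← Finset.sum_filter, Finset.sum_const, nsmul_eq_mul, ← Polynomial.C_eq_natCast]
    ring
  · have e1 : ∀ (q : Polynomial ℤ) (b : Fin n),
        (if (∀ a, σ (σ a) = a) ∧ σ b = b then q else 0) = 0 := by
      intro q b
      simp [hσ]
    simp only [e1, if_neg hσ]
    simp

theorem invSum_eq_hermite (n : ℕ) : invSum n = Polynomial.hermite n := by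
  induction n with
  | zero =>
    rw [invSum, hermite_zero, Finset.univ_unique, Finset.sum_singleton,
      if_pos (fun a => a.elim0)]
    simp
  | succ n ih => rw [invSum_succ, ih, hermite_succ]


lemma base_sum {d k : ℕ} (w : Fin k → Fin d → ℝ) :
    ∑ i : Fin k → Fin d, ∏ a, w a (i a) = ∏ a, ∑ c, w a c := by
  rw [Finset.prod_univ_sum, Fintype.piFinset_univ]

lemma fiber_sum_indep {d k : ℕ} (a b : Fin k) (hab : a ≠ b)
    (H : (Fin k → Fin d) → ℝ)
    (hH : ∀ (i : Fin k → Fin d) (c c' : Fin d),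
      H (Function.update (Function.update i a c) b c') = H i)
    (c₁ c₁' c₂ c₂' : Fin d) :
    ∑ i ∈ Finset.univ.filter (fun i : Fin k → Fin d => i a = c₁ ∧ i b = c₁'), H i
      = ∑ i ∈ Finset.univ.filter (fun i : Fin k → Fin d => i a = c₂ ∧ i b = c₂'), H i := by
  refine Finset.sum_nbij' (fun i => Function.update (Function.update i a c₂) b c₂')
    (fun i => Function.update (Function.update i a c₁) b c₁') ?_ ?_ ?_ ?_ ?_
  · intro i _
    simp only [Finset.mem_filter, Finset.mem_univ, true_and]
    constructor
    · rw [Function.update_of_ne hab, Function.update_self]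
    · rw [Function.update_self]
  · intro i _
    simp only [Finset.mem_filter, Finset.mem_univ, true_and]
    constructor
    · rw [Function.update_of_ne hab, Function.update_self]
    · rw [Function.update_self]
  · intro i hi
    simp only [Finset.mem_filter, Finset.mem_univ, true_and] at hi
    funext x
    beta_reduce
    rcases eq_or_ne x b with rfl | hxb
    · rw [Function.update_self, hi.2]
    · rw [Function.update_of_ne hxb]
      rcases eq_or_ne x a with rfl | hxa
      · rw [Function.update_self, hi.1]
      · rw [Function.update_of_ne hxa, Function.update_of_ne hxb, Function.update_of_ne hxa]
  · intro i hi
    simp only [Finset.mem_filter, Finset.mem_univ, true_and] at hi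
    funext x
    beta_reduce
    rcases eq_or_ne x b with rfl | hxb
    · rw [Function.update_self, hi.2]
    · rw [Function.update_of_ne hxb]
      rcases eq_or_ne x a with rfl | hxa
      · rw [Function.update_self, hi.1]
      · rw [Function.update_of_ne hxa, Function.update_of_ne hxb, Function.update_of_ne hxa]
  · intro i _
    exact (hH i c₂ c₂').symm

lemma sum_pair_congr {d k : ℕ} (a b : Fin k) (hab : a ≠ b)
    (φ ψ : Fin d → Fin d → ℝ) (H : (Fin k → Fin d) → ℝ)
    (hH : ∀ (i : Fin k → Fin d) (c c' : Fin d),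
      H (Function.update (Function.update i a c) b c') = H i)
    (hφψ : ∑ c : Fin d, ∑ c' : Fin d, φ c c' = ∑ c : Fin d, ∑ c' : Fin d, ψ c c') :
    ∑ i : Fin k → Fin d, φ (i a) (i b) * H i
      = ∑ i : Fin k → Fin d, ψ (i a) (i b) * H i := by
  rcases Nat.eq_zero_or_pos d with rfl | hd0
  · haveI : IsEmpty (Fin k → Fin 0) := ⟨fun i => (i a).elim0⟩
    rw [Finset.univ_eq_empty, Finset.sum_empty, Finset.sum_empty]
  · have c₀ : Fin d := ⟨0, hd0⟩
    have key : ∀ χ : Fin d → Fin d → ℝ,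
        ∑ i : Fin k → Fin d, χ (i a) (i b) * H i
          = (∑ c, ∑ c', χ c c') *
            ∑ i ∈ Finset.univ.filter (fun i : Fin k → Fin d => i a = c₀ ∧ i b = c₀), H i := by
      intro χ
      calc ∑ i : Fin k → Fin d, χ (i a) (i b) * H i
          = ∑ i : Fin k → Fin d, ∑ c, ∑ c',
              if i a = c ∧ i b = c' then χ c c' * H i else 0 := by
            refine Finset.sum_congr rfl fun i _ => ?_
            simp [ite_and, Finset.sum_ite_eq, Finset.sum_ite_eq']
        _ = ∑ c, ∑ c', ∑ i : Fin k → Fin d,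
              if i a = c ∧ i b = c' then χ c c' * H i else 0 := by
            rw [Finset.sum_comm]
            exact Finset.sum_congr rfl fun c _ => Finset.sum_comm
        _ = ∑ c, ∑ c', χ c c' *
              ∑ i ∈ Finset.univ.filter (fun i : Fin k → Fin d => i a = c ∧ i b = c'), H i := by
            refine Finset.sum_congr rfl fun c _ => Finset.sum_congr rfl fun c' _ => ?_
            rw [Finset.sum_filter, Finset.mul_sum]
            refine Finset.sum_congr rfl fun i _ => ?_
            by_cases h : i a = c ∧ i b = c' <;> simp [h]
        _ = ∑ c, ∑ c', χ c c' *
              ∑ i ∈ Finset.univ.filter (fun i : Fin k → Fin d => i a = c₀ ∧ i b = c₀), H i := by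
            refine Finset.sum_congr rfl fun c _ => Finset.sum_congr rfl fun c' _ => ?_
            rw [fiber_sum_indep a b hab H hH c c' c₀ c₀]
        _ = (∑ c, ∑ c', χ c c') *
              ∑ i ∈ Finset.univ.filter (fun i : Fin k → Fin d => i a = c₀ ∧ i b = c₀), H i := by
            rw [Finset.sum_mul]
            exact Finset.sum_congr rfl fun c _ => (Finset.sum_mul _ _ _).symm
    rw [key φ, key ψ, hφψ]

lemma key_sum {d k : ℕ} (hd : 0 < d) (v : Fin d → ℝ) (hv : ∑ c, v c ^ 2 = 1)
    (π : Fin k → Fin k) (hπ : ∀ a, π (π a) = a) :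
    ∀ (N : ℕ) (s : Finset (Fin k)), s.card ≤ N →
      (∀ a ∈ s, π a ∈ s) → (∀ a ∈ s, π a ≠ a) →
      ∀ w : Fin k → Fin d → ℝ,
      (∑ i : Fin k → Fin d,
        (∏ a ∈ s, ((if i a = i (π a) then (1:ℝ) else 0) * v (i a))) *
          ∏ a ∈ sᶜ, w a (i a))
        = ∏ a ∈ sᶜ, ∑ c, w a c := by
  intro N
  induction N with
  | zero =>
    intro s hcard hinva hmove w
    obtain rfl : s = ∅ := Finset.card_eq_zero.mp (Nat.le_zero.mp hcard)
    simp only [Finset.prod_empty, one_mul, Finset.compl_empty]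
    exact base_sum w
  | succ N ih =>
    intro s hcard hinva hmove w
    rcases Finset.eq_empty_or_nonempty s with rfl | ⟨a, ha⟩
    · simp only [Finset.prod_empty, one_mul, Finset.compl_empty]
      exact base_sum w
    · have hba : π a ≠ a := hmove a ha
      have hbs : π a ∈ s := hinva a ha
      set b := π a with hb
      set s' := s \ {a, b} with hs'
      have hab : a ≠ b := fun h => hba h.symm
      have hpb : π b = a := by rw [hb, hπ]
      have hbns' : b ∉ s' := by
        intro hmem
        rw [hs'] at hmem
        exact (Finset.mem_sdiff.mp hmem).2 (by simp)
      have hanb : a ∉ insert b s' := by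
        intro hmem
        rcases Finset.mem_insert.mp hmem with h | h
        · exact hab h
        · rw [hs'] at h
          exact (Finset.mem_sdiff.mp h).2 (Finset.mem_insert_self a {b})
      have hsplit : s = insert a (insert b s') := by
        ext x
        simp only [hs', Finset.mem_insert, Finset.mem_sdiff, Finset.mem_singleton, not_or]
        constructor
        · intro hx
          by_cases h1 : x = a
          · exact Or.inl h1
          by_cases h2 : x = b
          · exact Or.inr (Or.inl h2)
          · exact Or.inr (Or.inr ⟨hx, h1, h2⟩)
        · rintro (rfl | rfl | ⟨hx, -⟩)
          · exact ha
          · exact hbs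
          · exact hx
      have hs'mem : ∀ x ∈ s', x ≠ a ∧ x ≠ b ∧ π x ≠ a ∧ π x ≠ b := by
        intro x hx
        simp only [hs', Finset.mem_sdiff, Finset.mem_insert, Finset.mem_singleton, not_or] at hx
        obtain ⟨hxs, hxa, hxb⟩ := hx
        refine ⟨hxa, hxb, ?_, ?_⟩
        · intro h
          have hxx : x = π a := by rw [← hπ x, h]
          exact hxb (hxx.trans hb.symm)
        · intro h
          have hxx : x = π b := by rw [← hπ x, h]
          exact hxa (hxx.trans hpb)
      have hscmem : ∀ x ∈ sᶜ, x ≠ a ∧ x ≠ b := by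
        intro x hx
        rw [Finset.mem_compl] at hx
        exact ⟨fun h => hx (h ▸ ha), fun h => hx (h ▸ hbs)⟩
      set H : (Fin k → Fin d) → ℝ := fun i =>
        (∏ x ∈ s', ((if i x = i (π x) then (1:ℝ) else 0) * v (i x))) *
          ∏ x ∈ sᶜ, w x (i x) with hH
      have hHupd : ∀ (i : Fin k → Fin d) (c c' : Fin d),
          H (Function.update (Function.update i a c) b c') = H i := by
        intro i c c'
        simp only [hH]
        congr 1
        · refine Finset.prod_congr rfl fun x hx => ?_
          obtain ⟨hxa, hxb, hpa2, hpb2⟩ := hs'mem x hx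
          rw [Function.update_of_ne hxb, Function.update_of_ne hxa,
            Function.update_of_ne hpb2, Function.update_of_ne hpa2]
        · refine Finset.prod_congr rfl fun x hx => ?_
          obtain ⟨hxa, hxb⟩ := hscmem x hx
          rw [Function.update_of_ne hxb, Function.update_of_ne hxa]
      have hps : ∀ i : Fin k → Fin d,
          (∏ x ∈ s, ((if i x = i (π x) then (1:ℝ) else 0) * v (i x)))
            = ((if i a = i b then (1:ℝ) else 0) * v (i a)) *
              (((if i b = i a then (1:ℝ) else 0) * v (i b)) *
                ∏ x ∈ s', ((if i x = i (π x) then (1:ℝ) else 0) * v (i x))) := by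
        intro i
        rw [hsplit, Finset.prod_insert hanb, Finset.prod_insert hbns', ← hb, hpb]
      have hstep : ∑ i : Fin k → Fin d,
          (((if i a = i b then (1:ℝ) else 0) * v (i a)) *
            ((if i b = i a then (1:ℝ) else 0) * v (i b))) * H i
          = ∑ i : Fin k → Fin d, (v (i a) ^ 2 * ((d:ℝ))⁻¹) * H i := by
        refine sum_pair_congr a b hab
          (fun c c' => ((if c = c' then (1:ℝ) else 0) * v c) * ((if c' = c then (1:ℝ) else 0) * v c'))
          (fun c _ => v c ^ 2 * ((d:ℝ))⁻¹) H hHupd ?_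
        have h1 : ∀ c : Fin d,
            (∑ c' : Fin d, ((if c = c' then (1:ℝ) else 0) * v c) *
              ((if c' = c then (1:ℝ) else 0) * v c'))
              = v c ^ 2 := by
          intro c
          rw [Finset.sum_eq_single c]
          · simp [pow_two]
          · intro c' _ hne
            rw [if_neg (Ne.symm hne), if_neg hne]
            ring
          · intro h
            exact absurd (Finset.mem_univ c) h
        have h2 : ∀ c : Fin d, (∑ _c' : Fin d, v c ^ 2 * ((d:ℝ))⁻¹) = v c ^ 2 := by
          intro c
          rw [Finset.sum_const, Finset.card_univ, Fintype.card_fin, nsmul_eq_mul,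
            mul_comm, mul_assoc,
            inv_mul_cancel₀ (show (d:ℝ) ≠ 0 by exact_mod_cast hd.ne'), mul_one]
        simp only [h1, h2]
      set w' : Fin k → Fin d → ℝ :=
        Function.update (Function.update w a (fun c => v c ^ 2)) b (fun _ => ((d:ℝ))⁻¹) with hw'
      have hw'a : w' a = fun c => v c ^ 2 := by
        rw [hw', Function.update_of_ne hab, Function.update_self]
      have hw'b : w' b = fun _ => ((d:ℝ))⁻¹ := by
        rw [hw', Function.update_self]
      have hw'sc : ∀ x ∈ sᶜ, w' x = w x := by
        intro x hx
        obtain ⟨hxa, hxb⟩ := hscmem x hx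
        rw [hw', Function.update_of_ne hxb, Function.update_of_ne hxa]
      have hs'compl : s'ᶜ = insert a (insert b sᶜ) := by
        ext x
        simp only [Finset.mem_compl, hs', Finset.mem_sdiff, Finset.mem_insert,
          Finset.mem_singleton]
        tauto
      have hanbc : a ∉ insert b sᶜ := by
        intro hmem
        rcases Finset.mem_insert.mp hmem with h | h
        · exact hab h
        · exact (Finset.mem_compl.mp h) ha
      have hbnsc : b ∉ sᶜ := by
        rw [Finset.mem_compl, not_not]
        exact hbs
      have hcard' : s'.card ≤ N := by
        have hsub : ({a, b} : Finset (Fin k)) ⊆ s := by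
          intro x hx
          rcases Finset.mem_insert.mp hx with rfl | hx
          · exact ha
          · rw [Finset.mem_singleton.mp hx]; exact hbs
        have h2 : ({a, b} : Finset (Fin k)).card = 2 := by
          rw [Finset.card_insert_of_notMem (by simpa using hab), Finset.card_singleton]
        have h3 := Finset.card_sdiff_of_subset hsub
        rw [← hs', h2] at h3
        omega
      have hinva' : ∀ x ∈ s', π x ∈ s' := by
        intro x hx
        obtain ⟨_, _, hpa2, hpb2⟩ := hs'mem x hx
        have hxs : x ∈ s := (Finset.mem_sdiff.mp (hs' ▸ hx)).1
        simp only [hs', Finset.mem_sdiff, Finset.mem_insert, Finset.mem_singleton, not_or]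
        exact ⟨hinva x hxs, hpa2, hpb2⟩
      have hmove' : ∀ x ∈ s', π x ≠ x := by
        intro x hx
        have hxs : x ∈ s := (Finset.mem_sdiff.mp (hs' ▸ hx)).1
        exact hmove x hxs
      calc (∑ i : Fin k → Fin d,
            (∏ x ∈ s, ((if i x = i (π x) then (1:ℝ) else 0) * v (i x))) *
              ∏ x ∈ sᶜ, w x (i x))
          = ∑ i : Fin k → Fin d,
            (((if i a = i b then (1:ℝ) else 0) * v (i a)) *
              ((if i b = i a then (1:ℝ) else 0) * v (i b))) * H i := by
            refine Finset.sum_congr rfl fun i _ => ?_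
            rw [hps i]
            simp only [hH]
            ring
        _ = ∑ i : Fin k → Fin d, (v (i a) ^ 2 * ((d:ℝ))⁻¹) * H i := hstep
        _ = ∑ i : Fin k → Fin d,
            (∏ x ∈ s', ((if i x = i (π x) then (1:ℝ) else 0) * v (i x))) *
              ∏ x ∈ s'ᶜ, w' x (i x) := by
            refine Finset.sum_congr rfl fun i _ => ?_
            have e : (∏ x ∈ sᶜ, w' x (i x)) = ∏ x ∈ sᶜ, w x (i x) :=
              Finset.prod_congr rfl fun x hx => by rw [hw'sc x hx]
            rw [hs'compl, Finset.prod_insert hanbc, Finset.prod_insert hbnsc, hw'a, hw'b, e]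
            simp only [hH]
            ring
        _ = ∏ x ∈ s'ᶜ, ∑ c, w' x c := ih s' hcard' hinva' hmove' w'
        _ = ∏ x ∈ sᶜ, ∑ c, w x c := by
            have e : (∏ x ∈ sᶜ, ∑ c, w' x c) = ∏ x ∈ sᶜ, ∑ c, w x c :=
              Finset.prod_congr rfl fun x hx => by rw [hw'sc x hx]
            rw [hs'compl, Finset.prod_insert hanbc, Finset.prod_insert hbnsc, hw'a, hw'b, e]
            rw [hv, Finset.sum_const, Finset.card_univ, Fintype.card_fin, nsmul_eq_mul,
              mul_inv_cancel₀ (show (d:ℝ) ≠ 0 by exact_mod_cast hd.ne'), one_mul, one_mul]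

/-- For a unit vector `v ∈ ℝ^d`, `⟨H_k(x), v^{⊗k}⟩ = h_k(v · x)`. -/
theorem tinner_hermiteTensor_tensorPow
    (d : ℕ) (hd : 1 ≤ d) (k : ℕ) (v x : Fin d → ℝ)
    (hv : Real.sqrt (∑ a, v a ^ 2) = 1) :
    tinner (hermiteTensor d k x) (fun i => ∏ j, v (i j))
      = hermitePoly k (∑ a, v a * x a) := by
  classical
  have hd0 : 0 < d := hd
  have hv1 : ∑ a, v a ^ 2 = 1 := by rwa [Real.sqrt_eq_one] at hv
  set t : ℝ := ∑ a, v a * x a with ht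
  have main : ∀ π : Fin k → Fin k,
      (∑ i : Fin k → Fin d,
        (if ∀ a, π (π a) = a then
          (-1 : ℝ) ^ ((Finset.univ.filter fun a => π a ≠ a).card / 2) *
          (∏ a ∈ Finset.univ.filter fun a => π a ≠ a,
              if i a = i (π a) then (1 : ℝ) else 0) *
          ∏ a ∈ Finset.univ.filter fun a => π a = a, x (i a)
        else 0) * ∏ j, v (i j))
      = if ∀ a, π (π a) = a then
          (-1 : ℝ) ^ ((Finset.univ.filter fun a => π a ≠ a).card / 2) *
            t ^ (Finset.univ.filter fun a => π a = a).card
        else 0 := by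
    intro π
    by_cases hπ : ∀ a, π (π a) = a
    · set s : Finset (Fin k) := Finset.univ.filter fun a => π a ≠ a with hs
      have hcompl : sᶜ = Finset.univ.filter fun a => π a = a := by
        ext y
        simp [hs, not_not]
      have hsummand : ∀ i : Fin k → Fin d,
          ((-1 : ℝ) ^ (s.card / 2) *
            (∏ a ∈ s, if i a = i (π a) then (1:ℝ) else 0) *
            ∏ a ∈ sᶜ, x (i a)) * ∏ j, v (i j)
          = (-1 : ℝ) ^ (s.card / 2) *
              ((∏ a ∈ s, ((if i a = i (π a) then (1:ℝ) else 0) * v (i a))) *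
                ∏ a ∈ sᶜ, (x (i a) * v (i a))) := by
        intro i
        rw [← Finset.prod_mul_prod_compl s (fun j => v (i j)),
          Finset.prod_mul_distrib, Finset.prod_mul_distrib]
        ring
      have hinva : ∀ a ∈ s, π a ∈ s := by
        intro a ha
        simp only [hs, Finset.mem_filter, Finset.mem_univ, true_and] at ha ⊢
        intro h
        exact ha (((hπ a).symm.trans h).symm)
      have hmove : ∀ a ∈ s, π a ≠ a := by
        intro a ha
        simpa [hs] using ha
      have hkey := key_sum hd0 v hv1 π hπ s.card s le_rfl hinva hmove
        (fun a c => x c * v c)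
      have htc : ∀ a : Fin k, (∑ c, x c * v c) = t := by
        intro a
        rw [ht]
        exact Finset.sum_congr rfl fun c _ => mul_comm _ _
      calc (∑ i : Fin k → Fin d,
            (if ∀ a, π (π a) = a then
              (-1 : ℝ) ^ (s.card / 2) *
              (∏ a ∈ s, if i a = i (π a) then (1 : ℝ) else 0) *
              ∏ a ∈ Finset.univ.filter fun a => π a = a, x (i a)
            else 0) * ∏ j, v (i j))
          = ∑ i : Fin k → Fin d,
              ((-1 : ℝ) ^ (s.card / 2) *
                (∏ a ∈ s, if i a = i (π a) then (1:ℝ) else 0) *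
                ∏ a ∈ sᶜ, x (i a)) * ∏ j, v (i j) := by
            refine Finset.sum_congr rfl fun i _ => ?_
            rw [if_pos hπ, hcompl]
        _ = (-1 : ℝ) ^ (s.card / 2) *
              ∑ i : Fin k → Fin d,
                (∏ a ∈ s, ((if i a = i (π a) then (1:ℝ) else 0) * v (i a))) *
                  ∏ a ∈ sᶜ, (x (i a) * v (i a)) := by
            rw [Finset.mul_sum]
            exact Finset.sum_congr rfl fun i _ => hsummand i
        _ = (-1 : ℝ) ^ (s.card / 2) * ∏ a ∈ sᶜ, ∑ c, x c * v c := by rw [hkey]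
        _ = (-1 : ℝ) ^ (s.card / 2) * t ^ sᶜ.card := by
            rw [Finset.prod_congr rfl fun a _ => htc a, Finset.prod_const]
        _ = if ∀ a, π (π a) = a then
              (-1 : ℝ) ^ (s.card / 2) *
                t ^ (Finset.univ.filter fun a => π a = a).card
            else 0 := by rw [if_pos hπ, hcompl]
    · rw [if_neg hπ]
      refine Finset.sum_eq_zero fun i _ => ?_
      rw [if_neg hπ, zero_mul]
  have hpoly : (∑ π : Fin k → Fin k,
      if ∀ a, π (π a) = a then
        (-1 : ℝ) ^ ((Finset.univ.filter fun a => π a ≠ a).card / 2) *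
          t ^ (Finset.univ.filter fun a => π a = a).card
      else 0)
      = Polynomial.aeval t (Polynomial.hermite k) := by
    rw [← invSum_eq_hermite k, invSum, map_sum]
    refine Finset.sum_congr rfl fun π _ => ?_
    split_ifs with h
    · simp
    · simp
  rw [tinner]
  simp only [hermiteTensor]
  calc (∑ i : Fin k → Fin d,
        ((Real.sqrt k.factorial)⁻¹ *
          ∑ π : Fin k → Fin k,
            if ∀ a, π (π a) = a then
              (-1 : ℝ) ^ ((Finset.univ.filter fun a => π a ≠ a).card / 2) *
              (∏ a ∈ Finset.univ.filter fun a => π a ≠ a,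
                  if i a = i (π a) then (1 : ℝ) else 0) *
              ∏ a ∈ Finset.univ.filter fun a => π a = a, x (i a)
            else 0) * ∏ j, v (i j))
      = (Real.sqrt k.factorial)⁻¹ *
          ∑ i : Fin k → Fin d, ∑ π : Fin k → Fin k,
            (if ∀ a, π (π a) = a then
              (-1 : ℝ) ^ ((Finset.univ.filter fun a => π a ≠ a).card / 2) *
              (∏ a ∈ Finset.univ.filter fun a => π a ≠ a,
                  if i a = i (π a) then (1 : ℝ) else 0) *
              ∏ a ∈ Finset.univ.filter fun a => π a = a, x (i a)
            else 0) * ∏ j, v (i j) := by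
        rw [Finset.mul_sum]
        refine Finset.sum_congr rfl fun i _ => ?_
        rw [mul_assoc, ← Finset.sum_mul]
    _ = (Real.sqrt k.factorial)⁻¹ *
          ∑ π : Fin k → Fin k,
            if ∀ a, π (π a) = a then
              (-1 : ℝ) ^ ((Finset.univ.filter fun a => π a ≠ a).card / 2) *
                t ^ (Finset.univ.filter fun a => π a = a).card
            else 0 := by
        rw [Finset.sum_comm]
        exact congrArg _ (Finset.sum_congr rfl fun π _ => main π)
    _ = hermitePoly k t := by
        rw [hpoly, hermitePoly, div_eq_inv_mul]
end

section
/- For every even integer t ≥ 2 and every real x with |x| ≥ 2t, the normalized Hermite polynomial satisfies h_t(x) ≥ x^t / (2√(t!)). -/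
open MeasureTheory ProbabilityTheory

lemma fact_le_pow_mul (k : ℕ) : ∀ a : ℕ, (k + a).factorial ≤ k.factorial * (k + a) ^ a := by
  intro a
  induction a with
  | zero => simp
  | succ a ih =>
    calc (k + (a+1)).factorial = (k + a + 1) * (k + a).factorial := by
          rw [← Nat.add_assoc, Nat.factorial_succ]
      _ ≤ (k + a + 1) * (k.factorial * (k + a) ^ a) := Nat.mul_le_mul_left _ ih
      _ ≤ (k + a + 1) * (k.factorial * (k + a + 1) ^ a) := by
          have : (k + a) ^ a ≤ (k + a + 1) ^ a := Nat.pow_le_pow_left (Nat.le_succ _) a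
          exact Nat.mul_le_mul_left _ (Nat.mul_le_mul_left _ this)
      _ = k.factorial * (k + (a+1)) ^ (a+1) := by ring_nf

lemma two_pow_mul_dfac_le (a : ℕ) :
    2 ^ a * Nat.doubleFactorial (2 * a - 1) ≤ (2 * a).factorial := by
  cases a with
  | zero => simp [Nat.doubleFactorial]
  | succ a =>
    rw [show 2*(a+1)-1 = 2*a+1 by omega, show 2*(a+1) = 2*a+1+1 by ring,
      Nat.factorial_eq_mul_doubleFactorial]
    have h3 : 2 ^ (a+1) ≤ (2*a+1+1).doubleFactorial := by
      rw [show 2*a+1+1 = 2*(a+1) by ring, Nat.doubleFactorial_two_mul]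
      exact Nat.le_mul_of_pos_right _ (Nat.factorial_pos _)
    exact Nat.mul_le_mul_right _ h3

lemma geom_aux : ∀ m : ℕ, ∑ j ∈ Finset.range (2 * m), ((1:ℝ)/8) ^ (j / 2)
    ≤ 16/7 - (16/7) * (1/8) ^ m := by
  intro m
  induction m with
  | zero => simp
  | succ m ih =>
    rw [show 2 * (m + 1) = (2 * m + 1) + 1 by ring, Finset.sum_range_succ,
      Finset.sum_range_succ, show (2 * m + 1) / 2 = m by omega, show (2 * m) / 2 = m by omega,
      pow_succ]
    have h0 : (0:ℝ) ≤ (1/8) ^ m := by positivity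
    nlinarith [ih]

theorem key_thm
    (t : ℕ) (ht : 2 ≤ t) (hev : Even t) (x : ℝ) (hx : 2 * (t : ℝ) ≤ |x|) :
    x ^ t / 2 ≤ Polynomial.aeval x (Polynomial.hermite t) := by
  have hxt : (0:ℝ) ≤ x ^ t := hev.pow_nonneg x
  have habs : |x| ^ t = x ^ t := hev.pow_abs x
  have hexp : (Polynomial.aeval x (Polynomial.hermite t) : ℝ)
      = ∑ k ∈ Finset.range (t+1), ((Polynomial.hermite t).coeff k : ℝ) * x ^ k := by
    rw [Polynomial.aeval_eq_sum_range]
    simp [Polynomial.natDegree_hermite, zsmul_eq_mul]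
  have hterm : ∀ k ∈ Finset.range t,
      |((Polynomial.hermite t).coeff k : ℝ) * x ^ k|
        ≤ x ^ t * ((1:ℝ)/8) ^ ((t - k + 1) / 2) := by
    intro k hk
    rw [Finset.mem_range] at hk
    by_cases hpar : Even (t + k)
    · obtain ⟨r, hr⟩ := hev
      obtain ⟨s, hs⟩ := hpar
      set a := (t - k) / 2 with hadef
      have ha1 : t - k = 2 * a := by omega
      have ha2 : 1 ≤ a := by omega
      have hc : ((Polynomial.hermite t).coeff k : ℝ)
          = (-1) ^ a * ((Nat.doubleFactorial (2*a-1) * t.choose k : ℕ) : ℝ) := by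
        rw [Polynomial.coeff_hermite_of_even_add ⟨s, by omega⟩,
          show (t - k) / 2 = a from rfl, show t - k - 1 = 2*a - 1 by omega]
        push_cast
        ring
      have hnat : 2 ^ a * (Nat.doubleFactorial (2*a-1) * t.choose k) ≤ (t ^ 2) ^ a := by
        have h1 : 2 ^ a * Nat.doubleFactorial (2*a-1) ≤ (2*a).factorial :=
          two_pow_mul_dfac_le a
        have h2 : (2*a).factorial * t.choose k ≤ t ^ (2*a) := by
          have hfac := Nat.choose_mul_factorial_mul_factorial (le_of_lt hk)
          have key : (2*a).factorial * t.choose k * k.factorial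
              ≤ t ^ (2*a) * k.factorial := by
            calc (2*a).factorial * t.choose k * k.factorial
                = t.choose k * k.factorial * (t - k).factorial := by rw [ha1]; ring
              _ = t.factorial := hfac
              _ = (k + 2*a).factorial := by rw [show k + 2*a = t by omega]
              _ ≤ k.factorial * (k + 2*a) ^ (2*a) := fact_le_pow_mul k (2*a)
              _ = t ^ (2*a) * k.factorial := by rw [show k + 2*a = t by omega]; ring
          exact Nat.le_of_mul_le_mul_right key (Nat.factorial_pos k)
        calc 2 ^ a * (Nat.doubleFactorial (2*a-1) * t.choose k)
            = (2 ^ a * Nat.doubleFactorial (2*a-1)) * t.choose k := by ring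
          _ ≤ (2*a).factorial * t.choose k := Nat.mul_le_mul_right _ h1
          _ ≤ t ^ (2*a) := h2
          _ = (t ^ 2) ^ a := by rw [← pow_mul]
      have hb1 : |((Polynomial.hermite t).coeff k : ℝ)| ≤ ((t:ℝ) ^ 2 / 2) ^ a := by
        rw [hc, abs_mul, abs_pow, abs_neg, abs_one, one_pow, one_mul, Nat.abs_cast,
          div_pow, le_div_iff₀ (by positivity : (0:ℝ) < 2 ^ a)]
        have hcast := (Nat.cast_le (α := ℝ)).mpr hnat
        push_cast at hcast ⊢
        linarith
      have hb2 : ((t:ℝ) ^ 2 / 2) ^ a ≤ (x ^ 2 / 8) ^ a := by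
        apply pow_le_pow_left₀ (by positivity)
        nlinarith [hx, abs_nonneg x, sq_abs x]
      have hxe : (x ^ 2) ^ a = |x| ^ (2*a) := by
        rw [← pow_mul, mul_comm 2 a, mul_comm a 2]
        exact (Even.pow_abs ⟨a, by ring⟩ x).symm
      have hb3 : (x ^ 2 / 8) ^ a * |x| ^ k = x ^ t * ((1:ℝ)/8) ^ a := by
        calc (x ^ 2 / 8) ^ a * |x| ^ k
            = (|x| ^ (2*a) / 8 ^ a) * |x| ^ k := by rw [div_pow, hxe]
          _ = (|x| ^ (2*a) * |x| ^ k) * ((1:ℝ)/8) ^ a := by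
              rw [one_div, inv_pow]; ring
          _ = |x| ^ t * ((1:ℝ)/8) ^ a := by rw [← pow_add, show 2*a + k = t by omega]
          _ = x ^ t * ((1:ℝ)/8) ^ a := by rw [habs]
      calc |((Polynomial.hermite t).coeff k : ℝ) * x ^ k|
          = |((Polynomial.hermite t).coeff k : ℝ)| * |x| ^ k := by
            rw [abs_mul, abs_pow]
        _ ≤ (x ^ 2 / 8) ^ a * |x| ^ k :=
            mul_le_mul_of_nonneg_right (le_trans hb1 hb2) (by positivity)
        _ = x ^ t * ((1:ℝ)/8) ^ a := hb3
        _ = x ^ t * ((1:ℝ)/8) ^ ((t - k + 1) / 2) := by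
            rw [show (t - k + 1)/2 = a by omega]
    · rw [Polynomial.coeff_hermite_of_odd_add (Nat.not_even_iff_odd.mp hpar)]
      simp only [Int.cast_zero, zero_mul, abs_zero]
      exact mul_nonneg hxt (by positivity)
  have hgeom : ∑ k ∈ Finset.range t, ((1:ℝ)/8) ^ ((t - k + 1) / 2) ≤ 2/7 := by
    obtain ⟨m, hm⟩ := hev
    rw [← Finset.sum_range_reflect]
    have hcong : ∀ j ∈ Finset.range t,
        ((1:ℝ)/8) ^ ((t - (t - 1 - j) + 1) / 2) = ((1:ℝ)/8) ^ (j / 2) * (1/8) := by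
      intro j hj
      rw [Finset.mem_range] at hj
      rw [show (t - (t - 1 - j) + 1) / 2 = j / 2 + 1 by omega, pow_succ]
    rw [Finset.sum_congr rfl hcong, ← Finset.sum_mul]
    have h16 : ∑ j ∈ Finset.range t, ((1:ℝ)/8) ^ (j / 2) ≤ 16/7 := by
      rw [show t = 2 * m by omega]
      have := geom_aux m
      have h0 : (0:ℝ) ≤ (1/8) ^ m := by positivity
      linarith
    linarith
  rw [hexp, Finset.sum_range_succ, Polynomial.coeff_hermite_self]
  push_cast
  have hS : |∑ k ∈ Finset.range t, ((Polynomial.hermite t).coeff k : ℝ) * x ^ k|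
      ≤ x ^ t * (2/7) := by
    calc |∑ k ∈ Finset.range t, ((Polynomial.hermite t).coeff k : ℝ) * x ^ k|
        ≤ ∑ k ∈ Finset.range t, |((Polynomial.hermite t).coeff k : ℝ) * x ^ k| :=
          Finset.abs_sum_le_sum_abs _ _
      _ ≤ ∑ k ∈ Finset.range t, x ^ t * ((1:ℝ)/8) ^ ((t - k + 1) / 2) :=
          Finset.sum_le_sum hterm
      _ = x ^ t * ∑ k ∈ Finset.range t, ((1:ℝ)/8) ^ ((t - k + 1) / 2) := by
          rw [Finset.mul_sum]
      _ ≤ x ^ t * (2/7) := mul_le_mul_of_nonneg_left hgeom hxt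
  have := neg_abs_le (∑ k ∈ Finset.range t, ((Polynomial.hermite t).coeff k : ℝ) * x ^ k)
  nlinarith

/-- For every even `t ≥ 2` and every real `x` with `|x| ≥ 2t`,
`h_t(x) ≥ x^t / (2√(t!))`. -/
theorem hermitePoly_ge_of_abs_ge
    (t : ℕ) (ht : 2 ≤ t) (hev : Even t) (x : ℝ) (hx : 2 * (t : ℝ) ≤ |x|) :
    x ^ t / (2 * Real.sqrt t.factorial) ≤ hermitePoly t x := by
  have key := key_thm t ht hev x hx
  have hs : 0 < Real.sqrt t.factorial := Real.sqrt_pos.mpr (by positivity)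
  unfold hermitePoly
  rw [show x ^ t / (2 * Real.sqrt t.factorial) = x ^ t / 2 / Real.sqrt t.factorial from
    (div_div _ _ _).symm]
  gcongr
end

section
/- Let d ≥ 1, β ∈ ℝ^d, and σ ≥ 0 with σ² ≤ 2(1 − ‖β‖₂²). Let M be the real symmetric (d+1) × (d+1) matrix with M_{ij} = 0 for 1 ≤ i, j ≤ d, M_{i,d+1} = M_{d+1,i} = β_i for 1 ≤ i ≤ d, and M_{d+1,d+1} = ‖β‖₂² + σ² − 1. Then every eigenvalue λ of M satisfies −1 + σ²/2 ≤ λ ≤ ‖β‖₂² + σ²/2. -/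
open Matrix

/-- Eigenvalue bounds for the symmetric `(d+1) × (d+1)` matrix `M` with zero
`d × d` top-left block, last column/row equal to `β`, and bottom-right entry
`‖β‖₂² + σ² - 1`: if `σ² ≤ 2(1 - ‖β‖₂²)` then every eigenvalue `λ` of `M`
satisfies `-1 + σ²/2 ≤ λ ≤ ‖β‖₂² + σ²/2`. -/
theorem eigenvalue_bounds_mlr_matrix
    (d : ℕ) (hd : 1 ≤ d) (β : Fin d → ℝ) (σ : ℝ) (hσ : 0 ≤ σ)
    (hσβ : σ ^ 2 ≤ 2 * (1 - ∑ a, β a ^ 2))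
    (M : Matrix (Fin (d + 1)) (Fin (d + 1)) ℝ)
    (hM : M = Matrix.of fun (i j : Fin (d + 1)) =>
      if hi : (i : ℕ) < d then
        (if hj : (j : ℕ) < d then (0 : ℝ) else β ⟨(i : ℕ), hi⟩)
      else
        (if hj : (j : ℕ) < d then β ⟨(j : ℕ), hj⟩
         else (∑ a, β a ^ 2) + σ ^ 2 - 1)) :
    ∀ lam : ℝ, (∃ v : Fin (d + 1) → ℝ, v ≠ 0 ∧ M.mulVec v = lam • v) →
      -1 + σ ^ 2 / 2 ≤ lam ∧ lam ≤ (∑ a, β a ^ 2) + σ ^ 2 / 2 := by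
  intro lam ⟨v, hv, hMv⟩
  set b := ∑ a, β a ^ 2 with hbdef
  have hb : 0 ≤ b := Finset.sum_nonneg fun a _ => sq_nonneg _
  set t := v (Fin.last d) with ht
  have hx : ∀ i : Fin d, β i * t = lam * v i.castSucc := by
    intro i
    have h := congrFun hMv i.castSucc
    simp only [hM, Matrix.mulVec, dotProduct, Matrix.of_apply, Pi.smul_apply,
      smul_eq_mul] at h
    rw [Fin.sum_univ_castSucc] at h
    simp only [Fin.coe_castSucc, Fin.is_lt, dif_pos, Fin.val_last,
      lt_irrefl, dif_neg (lt_irrefl d), Fin.eta, zero_mul,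
      Finset.sum_const_zero, zero_add] at h
    simpa [← ht] using h
  have hy : (∑ i : Fin d, β i * v i.castSucc) + (b + σ ^ 2 - 1) * t = lam * t := by
    have h := congrFun hMv (Fin.last d)
    simp only [hM, Matrix.mulVec, dotProduct, Matrix.of_apply, Pi.smul_apply,
      smul_eq_mul] at h
    rw [Fin.sum_univ_castSucc] at h
    simp only [Fin.coe_castSucc, Fin.is_lt, dif_pos, Fin.val_last,
      dif_neg (lt_irrefl d), Fin.eta] at h
    simpa [← ht] using h
  by_cases hl : lam = 0
  · subst hl
    constructor <;> nlinarith [hb, hσβ]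
  · by_cases htz : t = 0
    · exfalso
      apply hv
      funext j
      refine Fin.lastCases ?_ ?_ j
      · rw [← ht]; exact htz
      · intro i
        have h := hx i
        rw [htz, mul_zero] at h
        exact (mul_eq_zero.mp h.symm).resolve_left hl
    · have hsum : lam * (∑ i : Fin d, β i * v i.castSucc) = b * t := by
        rw [Finset.mul_sum]
        have h : ∑ i : Fin d, lam * (β i * v i.castSucc) = ∑ i : Fin d, β i ^ 2 * t :=
          Finset.sum_congr rfl fun i _ => by rw [mul_left_comm, ← hx i]; ring
        rw [h, ← Finset.sum_mul]
      have h3 : (lam ^ 2 - (b + σ ^ 2 - 1) * lam - b) * t = 0 := by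
        linear_combination hsum - lam * hy
      have heq : lam ^ 2 - (b + σ ^ 2 - 1) * lam - b = 0 :=
        (mul_eq_zero.mp h3).resolve_right htz
      have hprod : (lam - (-1 + σ ^ 2 / 2)) * (lam - (b + σ ^ 2 / 2)) ≤ 0 := by
        nlinarith [heq, hb, hσβ, sq_nonneg σ]
      have hlu : -1 + σ ^ 2 / 2 ≤ b + σ ^ 2 / 2 := by linarith
      constructor
      · by_contra hc
        push_neg at hc
        nlinarith [hprod]
      · by_contra hc
        push_neg at hc
        nlinarith [hprod]
end
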